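/- Let $H$ be a Hopf algebra over a field $k$ whose antipode $S$ is injective (e.g., the dual Hopf algebra $H^\circ$ of any Hopf algebra). Then every locally finite left $H$-module $M$ (i.e., $\dim_k Hm < \infty$ for all $m \in M$) has the property that every $S(H)$-submodule of $M$ is an $H$-submodule. -/

import Mathlib

/-!
Fix `x ∈ N` and a finite-dimensional `H`-stable subspace `W ∋ x`, let `ρ : H → End W` be the
action and `B ⊆ End W` the subalgebra of endomorphisms preserving `N ∩ W`; by hypothesis
`ρ ∘ S` takes values in `B`. A given `h ∈ H` lies in a finite-dimensional subcoalgebra `C`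
(the fundamental theorem of coalgebras: take the span of `f ⇀ h ↼ g` over `f, g ∈ H*`).
In the finite-dimensional convolution algebra `Hom(C, End W)` the restriction of `ρ ∘ S` is
invertible with inverse the restriction of `ρ`, since `S` is the convolution inverse of the
identity and `ρ` is multiplicative. The maps with values in `B` form a finite-dimensional
subalgebra, which therefore contains the inverses of its units; hence `ρ h ∈ B`.
-/

open TensorProduct LinearMap Coalgebra WithConv

namespace TensorProduct

variable {k M N : Type*} [Field k] [AddCommGroup M] [Module k M] [AddCommGroup N] [Module k N]

theorem mem_range_lTensor_subtype_of_forall_dual {Y : Submodule k N} {t : M ⊗[k] N}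
    (ht : ∀ φ : Module.Dual k M, TensorProduct.lid k N (φ.rTensor N t) ∈ Y) :
    t ∈ range (Y.subtype.lTensor M) := by
  classical
  let b := Module.Free.chooseBasis k M
  let e := equivFinsuppOfBasisLeft (N := N) b
  have hcoeff (i) : e t i ∈ Y := by
    rw [equivFinsuppOfBasisLeft_apply]; exact ht _
  refine ⟨∑ i ∈ (e t).support, b i ⊗ₜ ⟨e t i, hcoeff i⟩, ?_⟩
  conv_rhs => rw [← e.symm_apply_apply t, equivFinsuppOfBasisLeft_symm_apply]
  simp [Finsupp.sum]

theorem mem_range_rTensor_subtype_of_forall_dual {Y : Submodule k M} {t : M ⊗[k] N}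
    (ht : ∀ φ : Module.Dual k N, TensorProduct.rid k M (φ.lTensor M t) ∈ Y) :
    t ∈ range (Y.subtype.rTensor N) := by
  classical
  let b := Module.Free.chooseBasis k N
  let e := equivFinsuppOfBasisRight (M := M) b
  have hcoeff (i) : e t i ∈ Y := by
    rw [equivFinsuppOfBasisRight_apply]; exact ht _
  refine ⟨∑ i ∈ (e t).support, ⟨e t i, hcoeff i⟩ ⊗ₜ b i, ?_⟩
  conv_rhs => rw [← e.symm_apply_apply t, equivFinsuppOfBasisRight_symm_apply]
  simp [Finsupp.sum]

theorem mem_range_map_subtype_of_forall_dual {Y₁ : Submodule k M} {Y₂ : Submodule k N}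
    {t : M ⊗[k] N}
    (h₁ : ∀ φ : Module.Dual k N, TensorProduct.rid k M (φ.lTensor M t) ∈ Y₁)
    (h₂ : ∀ φ : Module.Dual k M, TensorProduct.lid k N (φ.rTensor N t) ∈ Y₂) :
    t ∈ range (map Y₁.subtype Y₂.subtype) := by
  obtain ⟨u, rfl⟩ := mem_range_rTensor_subtype_of_forall_dual h₁
  have hu : u ∈ range (Y₂.subtype.lTensor Y₁) := by
    refine mem_range_lTensor_subtype_of_forall_dual fun φ => ?_
    obtain ⟨ψ, hψ⟩ := LinearMap.exists_extend φ
    convert h₂ ψ using 2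
    rw [← rTensor_comp_apply, hψ]
  obtain ⟨v, rfl⟩ := hu
  exact ⟨v, by rw [← rTensor_comp_lTensor]; rfl⟩

end TensorProduct

class Submodule.IsSubcoalgebra {R H : Type*} [CommSemiring R] [AddCommMonoid H] [Module R H]
    [CoalgebraStruct R H] (C : Submodule R H) : Prop where
  comul_mem : ∀ ⦃x⦄, x ∈ C →
    comul (R := R) x ∈ range (TensorProduct.map C.subtype C.subtype)

namespace Submodule.IsSubcoalgebra

variable {k H : Type*} [Field k] [AddCommGroup H] [Module k H] (C : Submodule k H)

lemma map_subtype_injective : Function.Injective (TensorProduct.map C.subtype C.subtype) :=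
  map_injective_of_flat_flat _ _ C.injective_subtype C.injective_subtype

variable [Coalgebra k H] [C.IsSubcoalgebra]

noncomputable instance : CoalgebraStruct k C where
  comul := (LinearEquiv.ofInjective _ (map_subtype_injective C)).symm.toLinearMap ∘ₗ
    (comul ∘ₗ C.subtype).codRestrict _ fun c => comul_mem c.2
  counit := counit ∘ₗ C.subtype

lemma map_subtype_comp_comul :
    TensorProduct.map C.subtype C.subtype ∘ₗ comul = comul (R := k) ∘ₗ C.subtype := by
  ext c
  exact congrArg Subtype.val
    ((LinearEquiv.ofInjective _ (map_subtype_injective C)).apply_symm_apply _)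

lemma counit_def : counit (R := k) (A := C) = counit ∘ₗ C.subtype := rfl

def subtypeCoalgHom : C →ₗc[k] H where
  __ := C.subtype
  counit_comp := rfl
  map_comp_comul := map_subtype_comp_comul C

lemma map_subtype_comul (c : C) :
    TensorProduct.map C.subtype C.subtype (comul c) = comul (R := k) (c : H) :=
  congr($(map_subtype_comp_comul C) c)

noncomputable instance : Coalgebra k C where
  coassoc := by
    ext c
    apply map_injective_of_flat_flat _ _ C.injective_subtype (map_subtype_injective C)
    simp only [comp_apply, LinearEquiv.coe_coe, map_map_assoc, map_rTensor, map_lTensor,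
      map_subtype_comp_comul]
    rw [← rTensor_comp_map, ← lTensor_comp_map, comp_apply, comp_apply, map_subtype_comul,
      coassoc_apply]
  rTensor_counit_comp_comul := by
    ext c
    apply Module.Flat.lTensor_preserves_injective_linearMap _ C.injective_subtype
    rw [comp_apply, ← comp_apply (lTensor k C.subtype), lTensor_comp_rTensor, counit_def,
      ← rTensor_comp_map, comp_apply, map_subtype_comul, rTensor_counit_comul]
    rfl
  lTensor_counit_comp_comul := by
    ext c
    apply Module.Flat.rTensor_preserves_injective_linearMap _ C.injective_subtype
    rw [comp_apply, ← comp_apply (rTensor k C.subtype), rTensor_comp_lTensor, counit_def,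
      ← lTensor_comp_map, comp_apply, map_subtype_comul, lTensor_counit_comul]
    rfl

end Submodule.IsSubcoalgebra

section Hit

variable {R H : Type*} [CommSemiring R] [AddCommMonoid H] [Module R H] [Coalgebra R H]

/-- `leftHit f x = ∑ x₍₁₎ f(x₍₂₎)` and `rightHit f x = ∑ f(x₍₁₎) x₍₂₎`, usually written
`f ⇀ x` and `x ↼ f`: the two commuting actions of the dual algebra `H*` on `H`. -/
noncomputable def Coalgebra.leftHit (f : WithConv (H →ₗ[R] R)) : H →ₗ[R] H :=
  (_root_.TensorProduct.rid R H).toLinearMap ∘ₗ f.ofConv.lTensor H ∘ₗ comul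

noncomputable def Coalgebra.rightHit (f : WithConv (H →ₗ[R] R)) : H →ₗ[R] H :=
  (_root_.TensorProduct.lid R H).toLinearMap ∘ₗ f.ofConv.rTensor H ∘ₗ comul

lemma Coalgebra.leftHit_mul (f g : WithConv (H →ₗ[R] R)) :
    leftHit (f * g) = leftHit f ∘ₗ leftHit g := by
  ext x
  have hcontract (t : (H ⊗[R] H) ⊗[R] H) :
      _root_.TensorProduct.rid R H ((mul' R R ∘ₗ map f.ofConv g.ofConv).lTensor H
        (_root_.TensorProduct.assoc R H H H t)) =
      _root_.TensorProduct.rid R H (map (_root_.TensorProduct.rid R H ∘ₗ f.ofConv.lTensor H)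
        g.ofConv t) := by
    induction t using TensorProduct.induction_on with
    | zero => simp
    | add _ _ h₁ h₂ => simp_all
    | tmul u c =>
      induction u using TensorProduct.induction_on <;> simp_all [smul_smul, mul_comm, add_tmul]
  calc leftHit (f * g) x
      = _root_.TensorProduct.rid R H ((mul' R R ∘ₗ map f.ofConv g.ofConv).lTensor H
          (comul.lTensor H (comul x))) := by
        simp [leftHit, LinearMap.convMul_def, lTensor_comp]
    _ = leftHit f (leftHit g x) := by
        rw [← coassoc_apply, hcontract, map_rTensor]
        exact congr($(CoassocSimps.rid_comp_map (leftHit f) g.ofConv) (comul x))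

lemma Coalgebra.rightHit_mul (f g : WithConv (H →ₗ[R] R)) :
    rightHit (f * g) = rightHit g ∘ₗ rightHit f := by
  ext x
  have hcontract (t : H ⊗[R] (H ⊗[R] H)) :
      _root_.TensorProduct.lid R H ((mul' R R ∘ₗ map f.ofConv g.ofConv).rTensor H
        ((_root_.TensorProduct.assoc R H H H).symm t)) =
      _root_.TensorProduct.lid R H
        (map f.ofConv (_root_.TensorProduct.lid R H ∘ₗ g.ofConv.rTensor H) t) := by
    induction t using TensorProduct.induction_on with
    | zero => simp
    | add _ _ h₁ h₂ => simp_all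
    | tmul a u =>
      induction u using TensorProduct.induction_on <;> simp_all [smul_smul, mul_comm, tmul_add]
  calc rightHit (f * g) x
      = _root_.TensorProduct.lid R H ((mul' R R ∘ₗ map f.ofConv g.ofConv).rTensor H
          (comul.rTensor H (comul x))) := by
        simp [rightHit, LinearMap.convMul_def, rTensor_comp]
    _ = rightHit g (rightHit f x) := by
        rw [← coassoc_symm_apply, hcontract, map_lTensor]
        exact congr($(CoassocSimps.lid_comp_map f.ofConv (rightHit g)) (comul x))

lemma Coalgebra.leftHit_comm_rightHit (f g : WithConv (H →ₗ[R] R)) :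
    leftHit f ∘ₗ rightHit g = rightHit g ∘ₗ leftHit f := by
  ext x
  have hcontract (t : (H ⊗[R] H) ⊗[R] H) :
      _root_.TensorProduct.lid R H (map g.ofConv (_root_.TensorProduct.rid R H ∘ₗ
        f.ofConv.lTensor H) (_root_.TensorProduct.assoc R H H H t)) =
      _root_.TensorProduct.rid R H (map (_root_.TensorProduct.lid R H ∘ₗ g.ofConv.rTensor H)
        f.ofConv t) := by
    induction t using TensorProduct.induction_on with
    | zero => simp
    | add _ _ h₁ h₂ => simp_all
    | tmul u c =>
      induction u using TensorProduct.induction_on <;>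
        simp_all [smul_comm _ (g.ofConv _), add_tmul]
  calc leftHit f (rightHit g x)
      = _root_.TensorProduct.lid R H (map g.ofConv (_root_.TensorProduct.rid R H ∘ₗ
          f.ofConv.lTensor H) (comul.lTensor H (comul x))) := by
        rw [map_lTensor]
        exact congr($(CoassocSimps.lid_comp_map g.ofConv (leftHit f)) (comul x)).symm
    _ = rightHit g (leftHit f x) := by
        rw [← coassoc_apply, hcontract, map_rTensor]
        exact congr($(CoassocSimps.rid_comp_map (rightHit g) f.ofConv) (comul x))

lemma Coalgebra.leftHit_one (x : H) : leftHit (1 : WithConv (H →ₗ[R] R)) x = x := by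
  simp [leftHit, LinearMap.convOne_def, lTensor_counit_comul]

lemma Coalgebra.rightHit_one (x : H) : rightHit (1 : WithConv (H →ₗ[R] R)) x = x := by
  simp [rightHit, LinearMap.convOne_def, rTensor_counit_comul]

lemma Coalgebra.leftHit_mem_span (f : WithConv (H →ₗ[R] R)) (x : H) :
    leftHit f x ∈ Submodule.span R ((ℛ R x).left '' (ℛ R x).index) := by
  rw [leftHit, comp_apply, comp_apply, ← (ℛ R x).eq, map_sum, map_sum]
  exact Submodule.sum_mem _ fun i hi => by
    simpa using Submodule.smul_mem _ _ (Submodule.subset_span (Set.mem_image_of_mem _ hi))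

end Hit

section FiniteSubcoalgebra

variable {k H : Type*} [Field k] [AddCommGroup H] [Module k H] [Coalgebra k H]

variable (k) in
def Coalgebra.hitSpan (h : H) : Submodule k H :=
  Submodule.span k (Set.range fun p : WithConv (H →ₗ[k] k) × WithConv (H →ₗ[k] k) =>
    leftHit p.1 (rightHit p.2 h))

lemma Coalgebra.mem_hitSpan_self (h : H) : h ∈ hitSpan k h :=
  Submodule.subset_span ⟨(1, 1), by simp [leftHit_one, rightHit_one]⟩

lemma Coalgebra.leftHit_mem_hitSpan (h : H) (l : WithConv (H →ₗ[k] k)) {x : H}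
    (hx : x ∈ hitSpan k h) : leftHit l x ∈ hitSpan k h := by
  refine (Submodule.span_le (p := (hitSpan k h).comap (leftHit l))).mpr ?_ hx
  rintro _ ⟨⟨f, g⟩, rfl⟩
  exact Submodule.subset_span ⟨(l * f, g), by simp [leftHit_mul]⟩

lemma Coalgebra.rightHit_mem_hitSpan (h : H) (l : WithConv (H →ₗ[k] k)) {x : H}
    (hx : x ∈ hitSpan k h) : rightHit l x ∈ hitSpan k h := by
  refine (Submodule.span_le (p := (hitSpan k h).comap (rightHit l))).mpr ?_ hx
  rintro _ ⟨⟨f, g⟩, rfl⟩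
  refine Submodule.subset_span ⟨(f, g * l), ?_⟩
  simp only [rightHit_mul, comp_apply]
  exact congr($(leftHit_comm_rightHit f l) _)

instance Coalgebra.isSubcoalgebra_hitSpan (h : H) : (hitSpan k h).IsSubcoalgebra :=
  ⟨fun _ hx => TensorProduct.mem_range_map_subtype_of_forall_dual
    (fun φ => leftHit_mem_hitSpan h (toConv φ) hx)
    (fun φ => rightHit_mem_hitSpan h (toConv φ) hx)⟩

instance Coalgebra.finiteDimensional_hitSpan (h : H) :
    FiniteDimensional k (hitSpan k h) := by
  -- `f ⇀ h ↼ g = ∑ g(h₍₁₎) • (f ⇀ h₍₂₎)`, and `f ⇀ h₍₂₎` lies in the span of the left factors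
  -- of `Δ h₍₂₎`.
  let S := ⋃ i ∈ (ℛ k h).index,
    (ℛ k ((ℛ k h).right i)).left '' (ℛ k ((ℛ k h).right i)).index
  have hS : S.Finite := (ℛ k h).index.finite_toSet.biUnion fun i _ => Set.toFinite _
  have := FiniteDimensional.span_of_finite k hS
  refine Submodule.finiteDimensional_of_le (Submodule.span_le.mpr ?_ : _ ≤ Submodule.span k S)
  rintro _ ⟨⟨f, g⟩, rfl⟩
  simp only [rightHit, comp_apply, LinearEquiv.coe_coe, ← (ℛ k h).eq, map_sum, rTensor_tmul,
    lid_tmul, map_smul]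
  refine Submodule.sum_mem _ fun i hi => ?_
  exact Submodule.smul_mem _ _ (Submodule.span_mono (Set.subset_biUnion_of_mem hi)
    (leftHit_mem_span f _))

end FiniteSubcoalgebra

theorem Subalgebra.mem_of_mul_eq_one_of_mul_eq_one {k A : Type*} [Field k] [Ring A]
    [Algebra k A] (B : Subalgebra k A) [FiniteDimensional k B] {u v : A} (hu : u ∈ B)
    (huv : u * v = 1) (hvu : v * u = 1) : v ∈ B := by
  have : IsArtinianRing B := IsArtinianRing.of_finite k B
  have hreg : (⟨u, hu⟩ : B) ∈ nonZeroDivisors B :=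
    comap_nonZeroDivisors_le_of_injective (f := B.val) Subtype.val_injective
      (IsUnit.mem_nonZeroDivisors ⟨⟨u, v, huv, hvu⟩, rfl⟩)
  obtain ⟨w, hw⟩ := (IsArtinianRing.isUnit_of_mem_nonZeroDivisors hreg).exists_right_inv
  have hvw : v = w := by
    calc v = v * (u * w) := by rw [show u * w = 1 from congrArg Subtype.val hw, mul_one]
      _ = w := by rw [← mul_assoc, hvu, one_mul]
  exact hvw ▸ w.2

section ConvSubalgebra

variable {k C A : Type*} [Field k] [AddCommGroup C] [Module k C] [Coalgebra k C]
  [Ring A] [Algebra k A]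

def Subalgebra.convLinearMap (B : Subalgebra k A) : Subalgebra k (WithConv (C →ₗ[k] A)) where
  carrier := {f | ∀ c, f c ∈ B}
  mul_mem' {f g} hf hg c := by
    rw [(ℛ k c).convMul_apply]
    exact B.sum_mem fun i _ => B.mul_mem (hf _) (hg _)
  add_mem' hf hg c := B.add_mem (hf c) (hg c)
  algebraMap_mem' r c := by
    rw [LinearMap.convAlgebraMap_apply]
    exact B.smul_mem (B.algebraMap_mem _) r

end ConvSubalgebra

theorem HopfAlgebra.algHom_mem_of_antipode_mem {k H A : Type*} [Field k] [Ring H]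
    [HopfAlgebra k H] [Ring A] [Algebra k A] [FiniteDimensional k A] (ρ : H →ₐ[k] A)
    {B : Subalgebra k A} (hB : ∀ g, ρ (antipode k g) ∈ B) (h : H) : ρ h ∈ B := by
  let C := Coalgebra.hitSpan k h
  let ι := Submodule.IsSubcoalgebra.subtypeCoalgHom C
  let restrict (f : WithConv (H →ₗ[k] H)) : WithConv (C →ₗ[k] A) :=
    toConv (ρ.toLinearMap ∘ₗ f.ofConv ∘ₗ ι.toLinearMap)
  have restrict_mul (f g) : restrict (f * g) = restrict f * restrict g := by
    calc restrict (f * g)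
        = toConv ((ρ.toLinearMap ∘ₗ (f * g).ofConv) ∘ₗ ι.toLinearMap) := rfl
      _ = restrict f * restrict g := by
        rw [LinearMap.algHom_comp_convMul_distrib, LinearMap.convMul_comp_coalgHom_distrib]
        rfl
  have restrict_one : restrict 1 = 1 := by
    ext c
    simp [restrict, ι, Submodule.IsSubcoalgebra.counit_def]
  have : FiniteDimensional k (WithConv (C →ₗ[k] A)) :=
    Module.Finite.equiv (WithConv.linearEquiv k _).symm
  have := (B.convLinearMap (C := C)).mem_of_mul_eq_one_of_mul_eq_one
    (u := restrict (toConv (antipode k))) (v := restrict (toConv .id)) (fun c => hB _)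
    (by rw [← restrict_mul, antipode_mul_id, restrict_one])
    (by rw [← restrict_mul, id_mul_antipode, restrict_one])
  exact this ⟨h, Coalgebra.mem_hitSpan_self h⟩

def Submodule.endStabilizer {k V : Type*} [CommSemiring k] [AddCommMonoid V] [Module k V]
    (U : Submodule k V) : Subalgebra k (Module.End k V) where
  carrier := {T | ∀ v ∈ U, T v ∈ U}
  mul_mem' hS hT v hv := hS _ (hT v hv)
  add_mem' hS hT v hv := U.add_mem (hS v hv) (hT v hv)
  algebraMap_mem' r _ hv := U.smul_mem r hv

theorem HopfAlgebra.smul_mem_of_antipode_smul_mem {k H V : Type*} [Field k] [Ring H]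
    [HopfAlgebra k H] [AddCommGroup V] [Module k V] [Module H V] [IsScalarTower k H V]
    [FiniteDimensional k V] {U : Submodule k V}
    (hU : ∀ g : H, ∀ v ∈ U, antipode k g • v ∈ U)
    (h : H) {v : V} (hv : v ∈ U) : h • v ∈ U :=
  HopfAlgebra.algHom_mem_of_antipode_mem (Algebra.lsmul k k V) (B := U.endStabilizer)
    hU h v hv

theorem sH_submodule_is_H_submodule
    {k H M : Type*} [Field k] [Ring H] [HopfAlgebra k H]
    [AddCommGroup M] [Module k M] [Module H M] [IsScalarTower k H M]
    (hlf : ∀ m : M, ∃ W : Submodule k M, FiniteDimensional k W ∧ m ∈ W ∧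
      ∀ (h : H), ∀ x ∈ W, h • x ∈ W)
    (N : Submodule k M)
    (hN : ∀ (h : H), ∀ x ∈ N, HopfAlgebra.antipode (R := k) h • x ∈ N) :
    ∀ (h : H), ∀ x ∈ N, h • x ∈ N := by
  intro h x hx
  obtain ⟨W, hW, hxW, hWH⟩ := hlf x
  let W' : Submodule H M := { W with smul_mem' := fun g _ hy => hWH g _ hy }
  have : FiniteDimensional k W' := hW
  exact HopfAlgebra.smul_mem_of_antipode_smul_mem (U := N.comap (W'.subtype.restrictScalars k))
    (fun g y => hN g y) h (v := ⟨x, hxW⟩) hx
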